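/- Let p be prime and n a positive integer with gcd(n, p) = 1. Let R3 = Z_p[u]/(u^3) and let C be a cyclic code of length n over R3 of the form C = <g(x), u·a1(x), u^2·a2(x)> where a2(x) | a1(x) | g(x) | (x^n - 1) in Z_p[x]. Then C is a principal ideal, generated by g(x) + u·a1(x) + u^2·a2(x). -/

import Mathlib

open Polynomial

noncomputable section

/-- `Ru p k` is the ring `R_k = Z_p[u]/(u^k)`. -/
abbrev Ru (p k : ℕ) : Type := Polynomial (ZMod p) ⧸ Ideal.span {(X : Polynomial (ZMod p)) ^ k}

instance instCommRingRu (p k : ℕ) : CommRing (Ru p k) := Ideal.Quotient.commRing _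

/-- The element `u` of `Ru p k`. -/
abbrev uR (p k : ℕ) : Ru p k := Ideal.Quotient.mk _ (X : Polynomial (ZMod p))

/-- `Rn p k n` is the ring `R_k[x]/(x^n - 1)`; its ideals are the cyclic codes of length `n`. -/
abbrev Rn (p k n : ℕ) : Type :=
  Polynomial (Ru p k) ⧸ Ideal.span {(X : Polynomial (Ru p k)) ^ n - 1}

/-- The natural ring map `Z_p[x] → R_k[x]/(x^n - 1)`. -/
abbrev liftP (p k n : ℕ) : Polynomial (ZMod p) →+* Rn p k n :=
  (Ideal.Quotient.mk _).comp (mapRingHom (algebraMap (ZMod p) (Ru p k)))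

/-- `u` as an element of `R_k[x]/(x^n - 1)`. -/
abbrev uu (p k n : ℕ) : Rn p k n := Ideal.Quotient.mk _ (C (uR p k))

/-- `x` as an element of `R_k[x]/(x^n - 1)`. -/
abbrev xx (p k n : ℕ) : Rn p k n := Ideal.Quotient.mk _ (X : Polynomial (Ru p k))

/-
Since `p ∤ n`, the polynomial `x^n - 1` is squarefree over `Z_p`, so every divisor `d` of it is
coprime to its cofactor `h`; in `R_3[x]/(x^n - 1)` this gives `d h = 0` and `s d + t h = 1`, and an
element `y` lies in an ideal as soon as `d y` and `h y` do. With `f = g + u a1 + u^2 a2`, this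
peels the generators `u^2 a1`, `u^2 a2`, `u a1` and finally `g` off the ideal `(f)` one at a time:
`u^2 g = u^2 f` and `h_g u f = u^2 h_g a1` by `u^3 = 0`, and `h_1 f = u^2 h_1 a2` as `a1 ∣ g`.
-/

theorem Ideal.mem_of_isCoprime_of_mul_mem {S : Type*} [CommRing S] {I : Ideal S} {a h y : S}
    (hc : IsCoprime a h) (ha : a * y ∈ I) (hh : h * y ∈ I) : y ∈ I := by
  obtain ⟨s, t, hst⟩ := hc
  have hy : y = s * (a * y) + t * (h * y) := by linear_combination -y * hst
  rw [hy]
  exact I.add_mem (I.mul_mem_left s ha) (I.mul_mem_left t hh)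

theorem span_triple_eq_span_sum {S : Type*} [CommRing S] {u G A1 A2 Hg H1 : S}
    (hu : u ^ 3 = 0) (hA1G : A1 ∣ G) (hGHg : G * Hg = 0) (hcG : IsCoprime G Hg)
    (hA1H1 : A1 * H1 = 0) (hcA1 : IsCoprime A1 H1) :
    Ideal.span {G, u * A1, u ^ 2 * A2} = Ideal.span {G + u * A1 + u ^ 2 * A2} := by
  set f := G + u * A1 + u ^ 2 * A2
  set I := Ideal.span {f}
  have hf : f ∈ I := Ideal.mem_span_singleton_self f
  have hGH1 : G * H1 = 0 := by
    obtain ⟨M, rfl⟩ := hA1G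
    linear_combination M * hA1H1
  have hu2G : u ^ 2 * G ∈ I := by
    have e : u ^ 2 * G = u ^ 2 * f := by linear_combination (-A1 - u * A2) * hu
    exact e ▸ I.mul_mem_left _ hf
  have hu2A1 : u ^ 2 * A1 ∈ I := by
    refine Ideal.mem_of_isCoprime_of_mul_mem hcG ?_ ?_
    · have e : G * (u ^ 2 * A1) = A1 * (u ^ 2 * G) := by ring
      exact e ▸ I.mul_mem_left _ hu2G
    · have e : Hg * (u ^ 2 * A1) = u * Hg * f := by
        linear_combination (-u) * hGHg + (-Hg * A2) * hu
      exact e ▸ I.mul_mem_left _ hf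
  have hu2A2 : u ^ 2 * A2 ∈ I := by
    refine Ideal.mem_of_isCoprime_of_mul_mem hcA1 ?_ ?_
    · have e : A1 * (u ^ 2 * A2) = A2 * (u ^ 2 * A1) := by ring
      exact e ▸ I.mul_mem_left _ hu2A1
    · have e : H1 * (u ^ 2 * A2) = H1 * f := by linear_combination -hGH1 - u * hA1H1
      exact e ▸ I.mul_mem_left _ hf
  have huA1 : u * A1 ∈ I := by
    refine Ideal.mem_of_isCoprime_of_mul_mem hcG ?_ ?_
    · have e : G * (u * A1) = A1 * (u * f) - A1 * (u ^ 2 * A1) := by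
        linear_combination -A1 * A2 * hu
      rw [e]
      exact I.sub_mem (I.mul_mem_left _ (I.mul_mem_left _ hf)) (I.mul_mem_left _ hu2A1)
    · have e : Hg * (u * A1) = Hg * f - Hg * (u ^ 2 * A2) := by linear_combination -hGHg
      rw [e]
      exact I.sub_mem (I.mul_mem_left _ hf) (I.mul_mem_left _ hu2A2)
  have hG : G ∈ I := by
    have e : G = f - u * A1 - u ^ 2 * A2 := by ring
    rw [e]
    exact I.sub_mem (I.sub_mem hf huA1) hu2A2
  refine le_antisymm ?_ ?_
  · simp only [Ideal.span_le, Set.insert_subset_iff, Set.singleton_subset_iff]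
    exact ⟨hG, huA1, hu2A2⟩
  · rw [Ideal.span_singleton_le_iff_mem]
    refine Ideal.add_mem _ (Ideal.add_mem _ ?_ ?_) ?_ <;> exact Ideal.subset_span (by simp)

theorem exists_mul_eq_zero_isCoprime_of_dvd {R S : Type*} [CommRing R] [IsBezout R]
    [CommRing S] (φ : R →+* S) {m d : R} (hm : Squarefree m) (hφm : φ m = 0) (hd : d ∣ m) :
    ∃ h : S, φ d * h = 0 ∧ IsCoprime (φ d) h := by
  obtain ⟨e, rfl⟩ := hd
  exact ⟨φ e, by rw [← map_mul, hφm], (IsRelPrime.of_squarefree_mul hm).isCoprime.map φ⟩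

theorem liftP_X_pow_sub_one (p k n : ℕ) : liftP p k n (X ^ n - 1) = 0 := by
  simp only [RingHom.comp_apply, Polynomial.map_sub, Polynomial.map_pow, coe_mapRingHom,
    Polynomial.map_X, Polynomial.map_one, Ideal.Quotient.eq_zero_iff_mem]
  exact Ideal.subset_span rfl

theorem uu_pow_self (p k n : ℕ) : uu p k n ^ k = 0 := by
  have huR : uR p k ^ k = 0 := by
    rw [← map_pow, Ideal.Quotient.eq_zero_iff_mem]
    exact Ideal.subset_span rfl
  rw [← map_pow, ← C_pow, huR, map_zero, map_zero]

theorem stmt1_general (p n : ℕ) (hp : p.Prime) (hco : Nat.Coprime n p)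
    (g a1 a2 : Polynomial (ZMod p)) (Ck : Ideal (Rn p 3 n))
    (h1g : a1 ∣ g) (hg : g ∣ (X : Polynomial (ZMod p)) ^ n - 1)
    (hC : Ck = Ideal.span {liftP p 3 n g, uu p 3 n * liftP p 3 n a1,
      uu p 3 n ^ 2 * liftP p 3 n a2}) :
    Ck = Ideal.span {liftP p 3 n g + uu p 3 n * liftP p 3 n a1 +
      uu p 3 n ^ 2 * liftP p 3 n a2} := by
  have := Fact.mk hp
  have hnp : (n : ZMod p) ≠ 0 := by
    rw [Ne, ZMod.natCast_eq_zero_iff]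
    exact (Nat.Prime.coprime_iff_not_dvd hp).mp hco.symm
  have hsq : Squarefree ((X : Polynomial (ZMod p)) ^ n - 1) :=
    (X_pow_sub_one_separable_iff.mpr hnp).squarefree
  obtain ⟨Hg, hGHg, hcG⟩ := exists_mul_eq_zero_isCoprime_of_dvd (S := Rn p 3 n) (liftP p 3 n)
    hsq (liftP_X_pow_sub_one p 3 n) hg
  obtain ⟨H1, hA1H1, hcA1⟩ := exists_mul_eq_zero_isCoprime_of_dvd (S := Rn p 3 n) (liftP p 3 n)
    hsq (liftP_X_pow_sub_one p 3 n) (h1g.trans hg)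
  rw [hC]
  exact span_triple_eq_span_sum (A2 := liftP p 3 n a2) (uu_pow_self p 3 n) (map_dvd _ h1g)
    hGHg hcG hA1H1 hcA1

/-- Over `R_3 = Z_p[u]/(u^3)`, if `gcd(n,p) = 1` and
`C = <g(x), u a1(x), u^2 a2(x)>` with `a2 ∣ a1 ∣ g ∣ x^n - 1` in `Z_p[x]`,
then `C = <g(x) + u a1(x) + u^2 a2(x)>`. -/
theorem stmt1 (p n : ℕ) (hp : p.Prime) (hn : 0 < n) (hco : Nat.Coprime n p)
    (g a1 a2 : Polynomial (ZMod p)) (Ck : Ideal (Rn p 3 n))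
    (h21 : a2 ∣ a1) (h1g : a1 ∣ g) (hg : g ∣ (X : Polynomial (ZMod p)) ^ n - 1)
    (hC : Ck = Ideal.span {liftP p 3 n g, uu p 3 n * liftP p 3 n a1,
      uu p 3 n ^ 2 * liftP p 3 n a2}) :
    Ck = Ideal.span {liftP p 3 n g + uu p 3 n * liftP p 3 n a1 +
      uu p 3 n ^ 2 * liftP p 3 n a2} :=
  stmt1_general p n hp hco g a1 a2 Ck h1g hg hC
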